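/- arXiv:1311.6615 — 3 statements merged into one kernel-verified Lean document; each statement's English description precedes it below -/
import Mathlib

section
/- For every ε > 0 and every natural number r ≥ 1, Σ_{i=1}^{r-1} (r - i)·(1+ε)^i·r^i / (r · i! · e^{(1+ε)r}) ≤ (1+ε)^{r-1}·r^r / ((r-1)!·e^{(1+ε)r}). -/
/-!
Since `(r - i) r^i / (r i!) = r^i/i! - r^(i-1)/(i-1)!`, the `i`-th term is `(1+ε)^i e^{-(1+ε)r}`
times a nonnegative increment of the partial exponential series `r^i/i!`, which increases up to
`i = r`. Bounding `(1+ε)^i` by `(1+ε)^(r-1)` makes the sum telescope to at most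
`(1+ε)^(r-1) e^{-(1+ε)r} r^(r-1)/(r-1)!`, which is the right-hand side divided by `r`.
-/

open Finset Nat

theorem sum_Ico_one_sub_pred (f : ℕ → ℝ) (n : ℕ) :
    ∑ i ∈ Ico 1 n, (f i - f (i - 1)) = f (n - 1) - f 0 := by
  rw [sum_Ico_eq_sum_range, ← sum_range_sub f (n - 1)]
  exact sum_congr rfl fun i _ => by rw [add_comm 1 i, Nat.add_sub_cancel]

theorem sum_Ico_mul_sub_pred_le {f w : ℕ → ℝ} {W : ℝ} {n : ℕ}
    (hf : ∀ i ∈ Ico 1 n, f (i - 1) ≤ f i) (hw : ∀ i ∈ Ico 1 n, w i ≤ W) :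
    ∑ i ∈ Ico 1 n, w i * (f i - f (i - 1)) ≤ W * (f (n - 1) - f 0) := by
  calc ∑ i ∈ Ico 1 n, w i * (f i - f (i - 1))
      ≤ ∑ i ∈ Ico 1 n, W * (f i - f (i - 1)) :=
        sum_le_sum fun i hi => mul_le_mul_of_nonneg_right (hw i hi) (sub_nonneg.2 (hf i hi))
    _ = W * (f (n - 1) - f 0) := by rw [← mul_sum, sum_Ico_one_sub_pred]

theorem pow_div_factorial_sub_pred (x : ℝ) {i : ℕ} (hi : 1 ≤ i) :
    x ^ i / (i ! : ℝ) - x ^ (i - 1) / (i - 1)! = (x - i) * x ^ (i - 1) / (i ! : ℝ) := by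
  obtain ⟨j, rfl⟩ := Nat.exists_eq_add_of_le' hi
  simp only [Nat.add_sub_cancel, factorial_succ, cast_mul, pow_succ]
  field_simp

theorem pow_div_factorial_pred_le {x : ℝ} {i : ℕ} (hi : 1 ≤ i) (hix : i ≤ x) :
    x ^ (i - 1) / (i - 1)! ≤ x ^ i / (i ! : ℝ) := by
  have hx : 0 ≤ x := by linarith [show (1 : ℝ) ≤ i by exact_mod_cast hi]
  rw [← sub_nonneg, pow_div_factorial_sub_pred x hi]
  have := sub_nonneg.2 hix
  positivity

theorem tail_sum_bound (ε : ℝ) (hε : 0 < ε) (r : ℕ) (hr : 1 ≤ r) :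
    ∑ i ∈ Finset.Ico 1 r,
        ((r : ℝ) - i) * (1 + ε) ^ i * (r : ℝ) ^ i
          / ((r : ℝ) * (Nat.factorial i) * Real.exp ((1 + ε) * r))
      ≤ (1 + ε) ^ (r - 1) * (r : ℝ) ^ r
          / ((Nat.factorial (r - 1)) * Real.exp ((1 + ε) * r)) := by
  set E := Real.exp ((1 + ε) * r)
  set F : ℕ → ℝ := fun i => (r : ℝ) ^ i / (i ! : ℝ)
  have hr0 : (r : ℝ) ≠ 0 := by positivity
  have hterm : ∀ i ∈ Ico 1 r, ((r : ℝ) - i) * (1 + ε) ^ i * (r : ℝ) ^ i / (r * (i ! : ℝ) * E)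
      = (1 + ε) ^ i / E * (F i - F (i - 1)) := fun i hi => by
    obtain ⟨hi, -⟩ := mem_Ico.1 hi
    rw [pow_div_factorial_sub_pred _ hi, ← Nat.sub_add_cancel hi, pow_succ]
    field_simp
    push_cast
    ring
  calc _ = ∑ i ∈ Ico 1 r, (1 + ε) ^ i / E * (F i - F (i - 1)) := sum_congr rfl hterm
    _ ≤ (1 + ε) ^ (r - 1) / E * (F (r - 1) - F 0) := by
      refine sum_Ico_mul_sub_pred_le (fun i hi => ?_) (fun i hi => ?_) <;>
        obtain ⟨hi1, hir⟩ := mem_Ico.1 hi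
      · exact pow_div_factorial_pred_le hi1 (by exact_mod_cast hir.le)
      · gcongr
        · linarith
        · omega
    _ ≤ (1 + ε) ^ (r - 1) / E * (r * F (r - 1)) := by
      have hF : 0 ≤ F (r - 1) := by positivity
      have : (1 : ℝ) ≤ r := by exact_mod_cast hr
      gcongr
      simp only [F, pow_zero, factorial_zero, cast_one, div_one]
      nlinarith
    _ = _ := by
      have hpow : (r : ℝ) ^ r = r ^ (r - 1) * r := by rw [← pow_succ, Nat.sub_add_cancel hr]
      simp only [F, hpow]
      field_simp
end

section
/- For every ε > 0, the quantity f(r) = (r - h((1+ε)r, r))/r tends to 0 as r → ∞, where h(Λ, k) = Σ_{i=1}^{k-1} i·Λ^i e^{-Λ}/i! + k·(1 - Σ_{i=0}^{k-1} Λ^i e^{-Λ}/i!). -/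
/-!
Writing `w i = Λ ^ i e^{-Λ} / i!` for the Poisson weights, `r - h(Λ, r) = ∑_{i<r} (r - i) w i`,
so `(r - h(Λ, r)) / r` lies between `0` and the lower tail `P(X < r) = ∑_{i<r} w i`.
For `Λ = a r` with `a = 1 + ε > 1`, bounding `(a r)^i ≤ a^r r^i` and `∑_{i<r} r^i / i! ≤ e^r`
gives the Chernoff-type bound `P(X < r) ≤ (a e^{1-a})^r`,
and `a e^{1-a} < 1` because `a < e^{a-1}`.
-/

noncomputable def hPoisson (Λ : ℝ) (k : ℕ) : ℝ :=
  (∑ i ∈ Finset.Ico 1 k, (i : ℝ) * (Λ ^ i * Real.exp (-Λ) / (Nat.factorial i)))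
    + (k : ℝ) * (1 - ∑ i ∈ Finset.range k, Λ ^ i * Real.exp (-Λ) / (Nat.factorial i))

open Finset Real Filter Nat

lemma natCast_sub_hPoisson (Λ : ℝ) (r : ℕ) :
    (r : ℝ) - hPoisson Λ r = ∑ i ∈ range r, ((r : ℝ) - i) * (Λ ^ i * exp (-Λ) / i !) := by
  have h_Ico : ∑ i ∈ Ico 1 r, (i : ℝ) * (Λ ^ i * exp (-Λ) / i !)
      = ∑ i ∈ range r, (i : ℝ) * (Λ ^ i * exp (-Λ) / i !) := by
    rcases r.eq_zero_or_pos with rfl | hr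
    · simp
    · rw [range_eq_Ico, sum_eq_sum_Ico_succ_bot hr]
      simp
  simp only [hPoisson, h_Ico, sub_mul, sum_sub_distrib, ← mul_sum]
  ring

lemma div_natCast_sub_hPoisson_mem_Icc {Λ : ℝ} (hΛ : 0 ≤ Λ) (r : ℕ) :
    ((r : ℝ) - hPoisson Λ r) / r ∈ Set.Icc 0 (∑ i ∈ range r, Λ ^ i * exp (-Λ) / i !) := by
  rw [natCast_sub_hPoisson, sum_div]
  constructor
  · refine sum_nonneg fun i hi => div_nonneg (mul_nonneg ?_ (by positivity)) r.cast_nonneg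
    have : (i : ℝ) < r := by exact_mod_cast mem_range.mp hi
    linarith
  · refine sum_le_sum fun i hi => ?_
    have hr : (0 : ℝ) < r := by exact_mod_cast (zero_le i).trans_lt (mem_range.mp hi)
    have hw : 0 ≤ Λ ^ i * exp (-Λ) / i ! := by positivity
    rw [div_le_iff₀ hr]
    nlinarith [i.cast_nonneg (α := ℝ)]

lemma sum_range_poisson_le_pow {a : ℝ} (ha : 1 ≤ a) (r : ℕ) :
    ∑ i ∈ range r, (a * r) ^ i * exp (-(a * r)) / i ! ≤ (a * exp (1 - a)) ^ r :=
  calc ∑ i ∈ range r, (a * r) ^ i * exp (-(a * r)) / i !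
      ≤ ∑ i ∈ range r, a ^ r * exp (-(a * r)) * ((r : ℝ) ^ i / i !) := by
        refine sum_le_sum fun i hi => ?_
        have h_pow : a ^ i ≤ a ^ r := pow_le_pow_right₀ ha (mem_range.mp hi).le
        calc (a * r) ^ i * exp (-(a * r)) / i !
            = a ^ i * (exp (-(a * r)) * ((r : ℝ) ^ i / i !)) := by ring
          _ ≤ a ^ r * (exp (-(a * r)) * ((r : ℝ) ^ i / i !)) := by gcongr
          _ = a ^ r * exp (-(a * r)) * ((r : ℝ) ^ i / i !) := by ring
    _ = a ^ r * exp (-(a * r)) * ∑ i ∈ range r, (r : ℝ) ^ i / i ! := by rw [mul_sum]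
    _ ≤ a ^ r * exp (-(a * r)) * exp r := by
        gcongr
        exact sum_le_exp_of_nonneg r.cast_nonneg r
    _ = (a * exp (1 - a)) ^ r := by
        rw [mul_pow, ← exp_nat_mul, mul_assoc, ← exp_add]
        ring_nf

lemma mul_exp_one_sub_lt_one {a : ℝ} (ha : a ≠ 1) : a * exp (1 - a) < 1 := by
  have h : a < exp (a - 1) := by linarith [add_one_lt_exp (sub_ne_zero.mpr ha)]
  calc a * exp (1 - a) < exp (a - 1) * exp (1 - a) := by gcongr
    _ = 1 := by rw [← exp_add, sub_add_sub_cancel', sub_self, exp_zero]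

theorem f_tendsto_zero (ε : ℝ) (hε : 0 < ε) :
    Filter.Tendsto
      (fun r : ℕ => ((r : ℝ) - hPoisson ((1 + ε) * r) r) / r)
      Filter.atTop (nhds 0) := by
  have ha : 1 ≤ 1 + ε := by linarith
  have h_bound (r : ℕ) := div_natCast_sub_hPoisson_mem_Icc (Λ := (1 + ε) * r) (by positivity) r
  exact squeeze_zero (fun r => (h_bound r).1)
    (fun r => (h_bound r).2.trans (sum_range_poisson_le_pow ha r))
    (tendsto_pow_atTop_nhds_zero_of_lt_one (by positivity)
      (mul_exp_one_sub_lt_one (ne_of_gt (by linarith))))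
end

section
/- For all reals c, γ with 0 < c < 1, γ > 0, cγ < 1, and for all β > 0 and c_β ≤ 1 - e^{-β/c}: (γβ + 2 - c_β)/(1 + γ) ≥ (1 + cγ)/(1 + γ) + (cγ/(1 + γ))·ln(1/(cγ)). -/
theorem alpha_lower_bound (c γ β cβ : ℝ) (hc0 : 0 < c) (hc1 : c < 1) (hγ : 0 < γ)
    (hcγ : c * γ < 1) (hβ : 0 < β) (hcβ : cβ ≤ 1 - Real.exp (-β / c)) :
    (γ * β + 2 - cβ) / (1 + γ)
      ≥ (1 + c * γ) / (1 + γ) + (c * γ / (1 + γ)) * Real.log (1 / (c * γ)) := by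
  have hcγ0 : (0:ℝ) < c * γ := mul_pos hc0 hγ
  have hlog : Real.log (1 / (c * γ)) = -Real.log (c * γ) := by
    rw [one_div, Real.log_inv]
  have hexp : Real.exp (Real.log (c * γ)) = c * γ := Real.exp_log hcγ0
  -- tangent line bound at x₀ = log (cγ)
  have htan : (-β / c - Real.log (c * γ)) + 1 ≤ Real.exp (-β / c - Real.log (c * γ)) :=
    Real.add_one_le_exp _
  have hE : Real.exp (-β / c - Real.log (c * γ)) = Real.exp (-β / c) / (c * γ) := by
    rw [Real.exp_sub, hexp]
  rw [hE] at htan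
  have htan' : c * γ * ((-β / c - Real.log (c * γ)) + 1) ≤ Real.exp (-β / c) := by
    have := mul_le_mul_of_nonneg_left htan (le_of_lt hcγ0)
    calc c * γ * ((-β / c - Real.log (c * γ)) + 1)
        ≤ c * γ * (Real.exp (-β / c) / (c * γ)) := this
      _ = Real.exp (-β / c) := by field_simp
  have hkey : 1 + c * γ + c * γ * Real.log (1 / (c * γ)) ≤ γ * β + 2 - cβ := by
    rw [hlog]
    have hfrac : c * γ * (-β / c) = -(γ * β) := by field_simp
    nlinarith [htan', hcβ]
  have h1γ : (0:ℝ) < 1 + γ := by linarith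
  rw [ge_iff_le]
  calc (1 + c * γ) / (1 + γ) + (c * γ / (1 + γ)) * Real.log (1 / (c * γ))
      = (1 + c * γ + c * γ * Real.log (1 / (c * γ))) / (1 + γ) := by ring
    _ ≤ (γ * β + 2 - cβ) / (1 + γ) := by gcongr
end
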